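/- In G_k (viewed as a bi-directed ancestral graph, so every vertex on any path is a collider), a collider path of the form (a_1, {a_1,a_2}, a_2, …, {a_{k−1},a_k}, a_k) induced by a permutation of V1 is minimal: no proper subsequence of its vertices containing both endpoints forms a path in G_k. -/

import Mathlib

open Classical in
/-- Vertex type of the bipartite graph `G k`: `V1 = Fin k` plus `V2` = unordered
pairs of distinct elements of `V1`. -/
abbrev GVert (k : ℕ) := Fin k ⊕ {p : Sym2 (Fin k) // ¬ p.IsDiag}

/-- The bipartite graph `G k`: `a ∈ V1` is adjacent to `p ∈ V2` iff `a ∈ p`. -/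
def biG (k : ℕ) : SimpleGraph (GVert k) where
  Adj x y := ∃ (a : Fin k) (p : {p : Sym2 (Fin k) // ¬ p.IsDiag}),
    a ∈ p.val ∧ ((x = Sum.inl a ∧ y = Sum.inr p) ∨ (x = Sum.inr p ∧ y = Sum.inl a))
  symm := by constructor; rintro x y ⟨a, p, hm, (⟨rfl, rfl⟩ | ⟨rfl, rfl⟩)⟩ <;> exact ⟨a, p, hm, by tauto⟩
  loopless := by constructor; rintro x ⟨a, p, hm, (⟨rfl, h⟩ | ⟨rfl, h⟩)⟩ <;> simp_all

/-- The `V2`-vertex `{a,b}` (junk value `inl a` if `a = b`). -/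
def pairV {k : ℕ} (a b : Fin k) : GVert k :=
  if h : a = b then Sum.inl a else Sum.inr ⟨s(a, b), by simp [h]⟩

/-- The alternating list of vertices `a₁, {a₁,a₂}, a₂, …` associated to a list in `V1`. -/
def altList {k : ℕ} : List (Fin k) → List (GVert k)
  | [] => []
  | [a] => [Sum.inl a]
  | a :: b :: rest => Sum.inl a :: pairV a b :: altList (b :: rest)

/-- The alternating path associated to a permutation of `Fin k`. -/
def permPath {k : ℕ} (σ : Equiv.Perm (Fin k)) : List (GVert k) :=
  altList ((List.finRange k).map σ)

/-- `L` is a path: consecutive vertices adjacent and no repeats. -/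
def IsPathList {V : Type*} (G : SimpleGraph V) (L : List V) : Prop :=
  List.Chain' G.Adj L ∧ L.Nodup

/-- `L` is a minimal path: no proper subsequence with the same endpoints is a path. -/
def IsMinimalPath {V : Type*} (G : SimpleGraph V) (L : List V) : Prop :=
  IsPathList G L ∧ ∀ L' : List V, L'.Sublist L → L'.head? = L.head? →
    L'.getLast? = L.getLast? → IsPathList G L' → L' = L

/-!
The alternating path is chordless: a vertex `a ∈ V1` is adjacent only to the pairs containing
`a`, and the only such pairs on the path are its two neighbours on it, while `{a, b}` is adjacent
only to `a` and `b`. In a chordless path without repetitions, a sublist that is again a path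
starting at the same vertex has to step from each vertex to its successor on the original path,
so reaching the same last vertex forces it to be the whole path.
-/

section Chordless

variable {V : Type*} (G : SimpleGraph V)

def IsChordless : List V → Prop
  | x :: y :: M => (∀ z ∈ M, ¬ G.Adj x z) ∧ IsChordless (y :: M)
  | _ => True

variable {G}

lemma List.exists_eq_cons_of_sublist_of_head?_eq {L' M : List V} {x : V}
    (hs : L'.Sublist (x :: M)) (hh : L'.head? = some x) : ∃ T, L' = x :: T ∧ T.Sublist M := by
  obtain ⟨T, rfl⟩ := List.head?_eq_some_iff.mp hh
  exact ⟨T, rfl, hs.tail⟩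

theorem IsChordless.eq_of_sublist : ∀ {L L' : List V}, IsChordless G L → L.Nodup →
    L'.Sublist L → L'.head? = L.head? → L'.getLast? = L.getLast? → L'.IsChain G.Adj → L' = L
  | [], _, _, _, hs, _, _, _ => List.sublist_nil.mp hs
  | [x], _, _, _, hs, hh, _, _ => by
    obtain ⟨T, rfl, hT⟩ := List.exists_eq_cons_of_sublist_of_head?_eq hs hh
    rw [List.sublist_nil.mp hT]
  | x :: y :: M, _, hc, hnd, hs, hh, hl, hch => by
    obtain ⟨T, rfl, hT⟩ := List.exists_eq_cons_of_sublist_of_head?_eq hs hh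
    obtain ⟨hx, hnd⟩ := List.nodup_cons.mp hnd
    obtain ⟨hchord, hc⟩ := hc
    match T, hT with
    | [], _ =>
      rw [List.getLast?_singleton, List.getLast?_cons_cons] at hl
      exact absurd (List.mem_of_getLast? hl.symm) hx
    | z :: T, hT =>
      obtain ⟨hxz, hch⟩ := List.isChain_cons_cons.mp hch
      obtain rfl : z = y := by
        rcases List.mem_cons.mp (hT.subset List.mem_cons_self) with h | h
        · exact h
        · exact absurd hxz (hchord z h)
      rw [hc.eq_of_sublist hnd hT rfl (by simpa only [List.getLast?_cons_cons] using hl) hch]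

theorem isMinimalPath_of_isChordless {L : List V} (hL : IsPathList G L) (hc : IsChordless G L) :
    IsMinimalPath G L :=
  ⟨hL, fun _ hs hh hl hp => hc.eq_of_sublist hL.2 hs hh hl hp.1⟩

end Chordless

section BipartiteGraph

variable {k : ℕ}

lemma biG_adj_inl_iff {a : Fin k} {x : GVert k} :
    (biG k).Adj (Sum.inl a) x ↔ ∃ p : {p : Sym2 (Fin k) // ¬ p.IsDiag}, a ∈ p.val ∧ x = Sum.inr p := by
  constructor
  · rintro ⟨c, p, hc, ⟨hca, rfl⟩ | ⟨hp, -⟩⟩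
    · obtain rfl := Sum.inl_injective hca
      exact ⟨p, hc, rfl⟩
    · cases hp
  · rintro ⟨p, ha, rfl⟩
    exact ⟨a, p, ha, Or.inl ⟨rfl, rfl⟩⟩

lemma biG_adj_inr_iff {p : {p : Sym2 (Fin k) // ¬ p.IsDiag}} {x : GVert k} :
    (biG k).Adj (Sum.inr p) x ↔ ∃ a ∈ p.val, x = Sum.inl a := by
  rw [SimpleGraph.adj_comm]
  constructor
  · rintro ⟨a, q, ha, ⟨rfl, hq⟩ | ⟨-, hq⟩⟩
    · obtain rfl := Sum.inr_injective hq
      exact ⟨a, ha, rfl⟩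
    · cases hq
  · rintro ⟨a, ha, rfl⟩
    exact ⟨a, p, ha, Or.inl ⟨rfl, rfl⟩⟩

lemma pairV_of_ne {a b : Fin k} (h : a ≠ b) :
    pairV a b = Sum.inr ⟨s(a, b), by simp [h]⟩ := by
  simp [pairV, h]

lemma exists_altList_cons_eq (b : Fin k) (l : List (Fin k)) :
    ∃ R, altList (b :: l) = Sum.inl b :: R := by
  cases l <;> exact ⟨_, rfl⟩

lemma mem_of_inl_mem_altList : ∀ {l : List (Fin k)} {c : Fin k}, Sum.inl c ∈ altList l → c ∈ l
  | [], _, h => by simp [altList] at h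
  | [a], _, h => by simpa [altList] using h
  | a :: b :: l, c, h => by
    simp only [altList, List.mem_cons] at h
    rcases h with h | h | h
    · exact Sum.inl_injective h ▸ List.mem_cons_self
    · by_cases hab : a = b
      · simp_all [pairV]
      · simp [pairV_of_ne hab] at h
    · exact List.mem_cons_of_mem a (mem_of_inl_mem_altList h)

lemma mem_of_inr_mem_altList : ∀ {l : List (Fin k)} {p : {p : Sym2 (Fin k) // ¬ p.IsDiag}},
    Sum.inr p ∈ altList l → ∀ c ∈ p.val, c ∈ l
  | [], _, h => by simp [altList] at h
  | [a], _, h => by simp [altList] at h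
  | a :: b :: l, p, h => by
    simp only [altList, List.mem_cons] at h
    rcases h with h | h | h
    · cases h
    · by_cases hab : a = b
      · simp [pairV, hab] at h
      · obtain rfl : p = ⟨s(a, b), _⟩ := Sum.inr_injective (h.trans (pairV_of_ne hab))
        intro c hc
        rcases Sym2.mem_iff.mp hc with rfl | rfl <;> simp
    · exact fun c hc => List.mem_cons_of_mem a (mem_of_inr_mem_altList h c hc)

lemma isChain_altList : ∀ {l : List (Fin k)}, l.IsChain (· ≠ ·) → (altList l).IsChain (biG k).Adj
  | [], _ => List.isChain_nil
  | [_], _ => List.isChain_singleton _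
  | a :: b :: l, h => by
    obtain ⟨hab, h⟩ := List.isChain_cons_cons.mp h
    obtain ⟨R, hR⟩ := exists_altList_cons_eq b l
    have ih := isChain_altList h
    rw [hR] at ih
    rw [altList, hR, pairV_of_ne hab]
    exact List.isChain_cons_cons.mpr ⟨biG_adj_inl_iff.mpr ⟨_, by simp, rfl⟩,
      List.isChain_cons_cons.mpr ⟨biG_adj_inr_iff.mpr ⟨b, by simp, rfl⟩, ih⟩⟩

lemma nodup_altList : ∀ {l : List (Fin k)}, l.Nodup → (altList l).Nodup
  | [], _ => List.nodup_nil
  | [a], _ => List.nodup_singleton _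
  | a :: b :: l, h => by
    obtain ⟨ha, h⟩ := List.nodup_cons.mp h
    have hab : a ≠ b := fun hab => ha (hab ▸ List.mem_cons_self)
    rw [altList, pairV_of_ne hab]
    refine List.nodup_cons.mpr ⟨?_, List.nodup_cons.mpr ⟨?_, nodup_altList h⟩⟩
    · rintro (h | ⟨_, h⟩)
      exact ha (mem_of_inl_mem_altList h)
    · exact fun h => ha (mem_of_inr_mem_altList h a (by simp))

lemma isChordless_altList : ∀ {l : List (Fin k)}, l.Nodup → IsChordless (biG k) (altList l)
  | [], _ => trivial
  | [_], _ => trivial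
  | a :: b :: l, h => by
    obtain ⟨ha, h⟩ := List.nodup_cons.mp h
    have hab : a ≠ b := fun hab => ha (hab ▸ List.mem_cons_self)
    obtain ⟨R, hR⟩ := exists_altList_cons_eq b l
    have hnd := nodup_altList h
    have ih := isChordless_altList h
    rw [hR] at hnd ih
    rw [altList, hR]
    refine ⟨?_, ?_, ih⟩
    · rintro z hz hadj
      obtain ⟨p, hap, rfl⟩ := biG_adj_inl_iff.mp hadj
      exact ha (mem_of_inr_mem_altList (hR ▸ hz) a hap)
    · rintro z hz hadj
      rw [pairV_of_ne hab, biG_adj_inr_iff] at hadj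
      obtain ⟨c, hc, rfl⟩ := hadj
      rcases Sym2.mem_iff.mp hc with rfl | rfl
      · exact ha (mem_of_inl_mem_altList (hR ▸ List.mem_cons_of_mem _ hz))
      · exact (List.nodup_cons.mp hnd).1 hz

end BipartiteGraph

theorem stmt5 (k : ℕ) (σ : Equiv.Perm (Fin k)) :
    IsMinimalPath (biG k) (permPath σ) := by
  have hnd : ((List.finRange k).map σ).Nodup := (List.nodup_finRange k).map σ.injective
  exact isMinimalPath_of_isChordless ⟨isChain_altList hnd.isChain, nodup_altList hnd⟩
    (isChordless_altList hnd)
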